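/- Let A1, A2 ∈ ℂ^{n×n}, B1, B2 ∈ ℂ^{n×m}, and let F1, F2 ∈ ℝ^{p×p} be real matrices (regarded as complex). Let N_{+i}, N_{-i} ∈ ℂ^{n×m} and D_{+i}, D_{-i} ∈ ℂ^{m×m} (i = 0,…,ω) be coefficient families satisfying, for all s ∈ ℂ: (s·I_n - A1)·N_+(s) - A2^#·N_+^#(s) = B1·D_+(s) + B2^#·D_+^#(s) and (s·I_n - A1)·N_-(s) + A2^#·N_-^#(s) = B1·D_-(s) - B2^#·D_-^#(s), where N_±(s) := Σ_i N_{±i}s^i and N_±^#(s) := Σ_i N_{±i}^# s^i (similarly for D). Let Z1, Z2 ∈ ℂ^{m×p} and set Z_± := Z1 ± Z2^#. Define X_± := (1/2)·Σ_{i=0}^{ω} [N_{±i}(Z_± + Z_±^#) + N_{∓i}(Z_± - Z_±^#)]·(F1 ± F2)^i and Y_± := (1/2)·Σ_{i=0}^{ω} [D_{±i}(Z_± + Z_±^#) + D_{∓i}(Z_± - Z_±^#)]·(F1 ± F2)^i. Then A1X_+ + A2^#X_+^# + B1Y_+ + B2^#Y_+^# = X_+(F1 + F2) and A1X_- - A2^#X_-^#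 + B1Y_- - B2^#Y_-^# = X_-(F1 - F2). -/

import Mathlib

open Matrix Finset

/-- Entrywise complex conjugate of a complex matrix. -/
noncomputable def mconj {n m : Type*} (M : Matrix n m ℂ) : Matrix n m ℂ :=
  M.map (starRingEnd ℂ)

/-- Evaluation of the polynomial matrix with coefficients `N 0, …, N ω` at `s`. -/
noncomputable def polyEval {n m : Type*} (ω : ℕ) (N : ℕ → Matrix n m ℂ) (s : ℂ) :
    Matrix n m ℂ :=
  ∑ i ∈ range (ω + 1), s ^ i • N i

lemma mconj_mconj {n m : Type*} (M : Matrix n m ℂ) : mconj (mconj M) = M := by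
  ext i j; simp [mconj]

lemma mconj_add {n m : Type*} (A B : Matrix n m ℂ) : mconj (A + B) = mconj A + mconj B := by
  ext i j; simp [mconj]

lemma mconj_sub {n m : Type*} (A B : Matrix n m ℂ) : mconj (A - B) = mconj A - mconj B := by
  ext i j; simp [mconj]

lemma mconj_smul {n m : Type*} (c : ℂ) (A : Matrix n m ℂ) :
    mconj (c • A) = (starRingEnd ℂ c) • mconj A := by
  ext i j; simp [mconj]

lemma mconj_mul {n m l : Type*} [Fintype m] (A : Matrix n m ℂ) (B : Matrix m l ℂ) :
    mconj (A * B) = mconj A * mconj B := by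
  ext i j; simp [mconj, Matrix.mul_apply, map_sum]

lemma mconj_sum {n m ι : Type*} (s : Finset ι) (f : ι → Matrix n m ℂ) :
    mconj (∑ i ∈ s, f i) = ∑ i ∈ s, mconj (f i) := by
  ext i j; simp [mconj, Matrix.sum_apply]

lemma mconj_one {n : Type*} [DecidableEq n] : mconj (1 : Matrix n n ℂ) = 1 := by
  ext i j; simp [mconj, Matrix.one_apply, apply_ite]

lemma mconj_pow {n : Type*} [Fintype n] [DecidableEq n] (M : Matrix n n ℂ) (k : ℕ) :
    mconj (M ^ k) = (mconj M) ^ k := by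
  induction k with
  | zero => simp [mconj_one]
  | succ k ih => rw [pow_succ, pow_succ, mconj_mul, ih]

lemma mconj_map_ofReal {n m : Type*} (F : Matrix n m ℝ) :
    mconj (F.map Complex.ofReal) = F.map Complex.ofReal := by
  ext i j; simp [mconj]

lemma coeff_eq_zero {a b : Type*} (k : ℕ) (C : ℕ → Matrix a b ℂ)
    (h : ∀ s : ℂ, ∑ i ∈ range k, s ^ i • C i = 0) :
    ∀ j < k, C j = 0 := by
  intro j hj
  ext x y
  have h1 : ∀ s : ℂ, ∑ i ∈ range k, C i x y * s ^ i = 0 := by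
    intro s
    have := congrFun (congrFun (h s) x) y
    simpa [Matrix.sum_apply, mul_comm] using this
  have h2 : (∑ i ∈ range k, Polynomial.C (C i x y) * Polynomial.X ^ i) = (0 : Polynomial ℂ) := by
    apply Polynomial.funext
    intro s
    simp [Polynomial.eval_finset_sum, h1 s]
  have h3 := congrArg (fun q => Polynomial.coeff q j) h2
  simpa [Polynomial.finset_sum_coeff, Polynomial.coeff_C_mul, Polynomial.coeff_X_pow,
    Finset.mem_range, hj] using h3

lemma extract {n m : ℕ} (ω : ℕ) (N S : ℕ → Matrix (Fin n) (Fin m) ℂ)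
    (h : ∀ s : ℂ, ∑ i ∈ range (ω+1), s^(i+1) • N i = ∑ i ∈ range (ω+1), s^i • S i) :
    S 0 = 0 ∧ (∀ i, i + 1 ≤ ω → S (i+1) = N i) ∧ N ω = 0 := by
  set P : ℕ → Matrix (Fin n) (Fin m) ℂ :=
    fun j => match j with | 0 => 0 | j+1 => N j with hP
  set Q : ℕ → Matrix (Fin n) (Fin m) ℂ :=
    fun j => if j ≤ ω then S j else 0 with hQ
  have hz : ∀ j < ω + 2, P j - Q j = 0 := by
    apply coeff_eq_zero
    intro s
    have e1 : ∑ j ∈ range (ω+2), s^j • P j = ∑ i ∈ range (ω+1), s^(i+1) • N i := by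
      rw [Finset.sum_range_succ']
      simp [hP]
    have e2 : ∑ j ∈ range (ω+2), s^j • Q j = ∑ i ∈ range (ω+1), s^i • S i := by
      rw [Finset.sum_range_succ]
      have hc : ∀ j ∈ range (ω+1), s^j • Q j = s^j • S j := by
        intro j hj
        rw [hQ]
        simp only []
        rw [if_pos (by simpa using Nat.lt_succ_iff.mp (Finset.mem_range.mp hj))]
      rw [Finset.sum_congr rfl hc]
      simp [hQ]
    calc ∑ j ∈ range (ω+2), s^j • (P j - Q j)
        = ∑ j ∈ range (ω+2), (s^j • P j - s^j • Q j) := by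
          apply Finset.sum_congr rfl; intro j _; rw [smul_sub]
      _ = ∑ j ∈ range (ω+2), s^j • P j - ∑ j ∈ range (ω+2), s^j • Q j :=
          Finset.sum_sub_distrib _ _
      _ = 0 := by rw [e1, e2, h s, sub_self]
  refine ⟨?_, ?_, ?_⟩
  · have := hz 0 (by omega)
    simpa [hP, hQ] using (sub_eq_zero.mp this).symm
  · intro i hi
    have := sub_eq_zero.mp (hz (i+1) (by omega))
    simp only [hP, hQ, if_pos hi] at this
    exact this.symm
  · have := sub_eq_zero.mp (hz (ω+1) (by omega))
    simpa [hP, hQ] using this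

lemma key {n m p : ℕ} (ω : ℕ)
    (Na Nb Sa Sb : ℕ → Matrix (Fin n) (Fin m) ℂ)
    (W V : Matrix (Fin m) (Fin p) ℂ) (G : Matrix (Fin p) (Fin p) ℂ)
    (ha0 : Sa 0 = 0) (hb0 : Sb 0 = 0)
    (ha : ∀ i, i + 1 ≤ ω → Sa (i+1) = Na i)
    (hb : ∀ i, i + 1 ≤ ω → Sb (i+1) = Nb i)
    (haT : Na ω = 0) (hbT : Nb ω = 0) :
    ∑ i ∈ range (ω+1), (Sa i * W + Sb i * V) * G ^ i
      = (∑ i ∈ range (ω+1), (Na i * W + Nb i * V) * G ^ i) * G := by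
  set Na' : ℕ → Matrix (Fin n) (Fin m) ℂ :=
    fun j => match j with | 0 => 0 | j+1 => Na j with hNa'
  set Nb' : ℕ → Matrix (Fin n) (Fin m) ℂ :=
    fun j => match j with | 0 => 0 | j+1 => Nb j with hNb'
  set g : ℕ → Matrix (Fin n) (Fin p) ℂ :=
    fun j => (Na' j * W + Nb' j * V) * G ^ j with hg
  have lhs_eq : ∑ i ∈ range (ω+1), (Sa i * W + Sb i * V) * G ^ i
      = ∑ j ∈ range (ω+2), g j := by
    have e : ∑ j ∈ range (ω+2), g j = ∑ j ∈ range (ω+1), g j + g (ω+1) :=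
      Finset.sum_range_succ g (ω+1)
    have hz : g (ω+1) = 0 := by simp [hg, hNa', hNb', haT, hbT]
    rw [e, hz, add_zero]
    apply Finset.sum_congr rfl
    intro i hi
    have hi' := Nat.lt_succ_iff.mp (Finset.mem_range.mp hi)
    match i with
    | 0 => simp [hg, hNa', hNb', ha0, hb0]
    | j+1 => simp [hg, hNa', hNb', ha j (by omega), hb j (by omega)]
  have rhs_eq : (∑ i ∈ range (ω+1), (Na i * W + Nb i * V) * G ^ i) * G
      = ∑ j ∈ range (ω+2), g j := by
    have e : ∑ j ∈ range (ω+2), g j = ∑ j ∈ range (ω+1), g (j+1) + g 0 :=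
      Finset.sum_range_succ' g (ω+1)
    have hz : g 0 = 0 := by simp [hg, hNa', hNb']
    rw [Matrix.sum_mul, e, hz, add_zero]
    apply Finset.sum_congr rfl
    intro i _
    simp [hg, hNa', hNb', pow_succ, Matrix.mul_assoc]
  rw [lhs_eq, rhs_eq]

lemma assemble {n m p : ℕ} (ω : ℕ) (ε : ℂ)
    (A1 A2 : Matrix (Fin n) (Fin n) ℂ) (B1 B2 : Matrix (Fin n) (Fin m) ℂ)
    (Na Nb : ℕ → Matrix (Fin n) (Fin m) ℂ) (Da Db : ℕ → Matrix (Fin m) (Fin m) ℂ)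
    (W V : Matrix (Fin m) (Fin p) ℂ) (G : Matrix (Fin p) (Fin p) ℂ)
    (hW : mconj W = W) (hV : mconj V = -V) (hG : mconj G = G)
    (X : Matrix (Fin n) (Fin p) ℂ) (Y : Matrix (Fin m) (Fin p) ℂ)
    (hX : X = (1/2 : ℂ) • ∑ i ∈ range (ω+1), (Na i * W + Nb i * V) * G ^ i)
    (hY : Y = (1/2 : ℂ) • ∑ i ∈ range (ω+1), (Da i * W + Db i * V) * G ^ i)
    (hSa0 : A1 * Na 0 + ε • (mconj A2 * mconj (Na 0)) + B1 * Da 0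
        + ε • (mconj B2 * mconj (Da 0)) = 0)
    (hSa : ∀ i, i + 1 ≤ ω → A1 * Na (i+1) + ε • (mconj A2 * mconj (Na (i+1)))
        + B1 * Da (i+1) + ε • (mconj B2 * mconj (Da (i+1))) = Na i)
    (hNaT : Na ω = 0)
    (hSb0 : A1 * Nb 0 - ε • (mconj A2 * mconj (Nb 0)) + B1 * Db 0
        - ε • (mconj B2 * mconj (Db 0)) = 0)
    (hSb : ∀ i, i + 1 ≤ ω → A1 * Nb (i+1) - ε • (mconj A2 * mconj (Nb (i+1)))
        + B1 * Db (i+1) - ε • (mconj B2 * mconj (Db (i+1))) = Nb i)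
    (hNbT : Nb ω = 0) :
    A1 * X + ε • (mconj A2 * mconj X) + B1 * Y + ε • (mconj B2 * mconj Y) = X * G := by
  have hGpow : ∀ i : ℕ, mconj (G ^ i) = G ^ i := fun i => by rw [mconj_pow, hG]
  have hhalf : (starRingEnd ℂ) (1/2 : ℂ) = (1/2 : ℂ) := by
    rw [map_div₀, _root_.map_one, map_ofNat]
  have hXc : mconj X
      = (1/2 : ℂ) • ∑ i ∈ range (ω+1), (mconj (Na i) * W - mconj (Nb i) * V) * G ^ i := by
    rw [hX, mconj_smul, hhalf, mconj_sum]
    congr 1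
    apply Finset.sum_congr rfl
    intro i _
    rw [mconj_mul, mconj_add, mconj_mul, mconj_mul, hW, hV, hGpow, Matrix.mul_neg,
      ← sub_eq_add_neg]
  have hYc : mconj Y
      = (1/2 : ℂ) • ∑ i ∈ range (ω+1), (mconj (Da i) * W - mconj (Db i) * V) * G ^ i := by
    rw [hY, mconj_smul, hhalf, mconj_sum]
    congr 1
    apply Finset.sum_congr rfl
    intro i _
    rw [mconj_mul, mconj_add, mconj_mul, mconj_mul, hW, hV, hGpow, Matrix.mul_neg,
      ← sub_eq_add_neg]
  set Sa : ℕ → Matrix (Fin n) (Fin m) ℂ := fun i =>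
    A1 * Na i + ε • (mconj A2 * mconj (Na i)) + B1 * Da i + ε • (mconj B2 * mconj (Da i))
    with hSadef
  set Sb : ℕ → Matrix (Fin n) (Fin m) ℂ := fun i =>
    A1 * Nb i - ε • (mconj A2 * mconj (Nb i)) + B1 * Db i - ε • (mconj B2 * mconj (Db i))
    with hSbdef
  have hk := key ω Na Nb Sa Sb W V G hSa0 hSb0 hSa hSb hNaT hNbT
  calc A1 * X + ε • (mconj A2 * mconj X) + B1 * Y + ε • (mconj B2 * mconj Y)
      = (1/2 : ℂ) • ∑ i ∈ range (ω+1), (Sa i * W + Sb i * V) * G ^ i := by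
        rw [hXc, hYc, hX, hY]
        rw [Matrix.mul_smul, Matrix.mul_smul, Matrix.mul_smul, Matrix.mul_smul,
          smul_comm ε ((1:ℂ)/2), smul_comm ε ((1:ℂ)/2), ← smul_add, ← smul_add, ← smul_add]
        congr 1
        rw [Matrix.mul_sum, Matrix.mul_sum, Matrix.mul_sum, Matrix.mul_sum,
          Finset.smul_sum, Finset.smul_sum, ← Finset.sum_add_distrib,
          ← Finset.sum_add_distrib, ← Finset.sum_add_distrib]
        apply Finset.sum_congr rfl
        intro i _
        simp only [hSadef, hSbdef, Matrix.mul_add, Matrix.add_mul, Matrix.mul_sub,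
          Matrix.sub_mul, Matrix.smul_mul, Matrix.mul_smul, Matrix.mul_assoc,
          smul_add, smul_sub]
        abel
      _ = ((1/2 : ℂ) • ∑ i ∈ range (ω+1), (Na i * W + Nb i * V) * G ^ i) * G := by
        rw [hk, Matrix.smul_mul]
      _ = X * G := by rw [hX]

lemma smul_polyEval {n m : Type*} (ω : ℕ) (N : ℕ → Matrix n m ℂ) (s : ℂ) :
    s • polyEval ω N s = ∑ i ∈ range (ω+1), s^(i+1) • N i := by
  unfold polyEval
  rw [Finset.smul_sum]
  exact Finset.sum_congr rfl fun i _ => by rw [smul_smul, ← pow_succ']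

lemma mul_polyEval {n' m l : Type*} [Fintype n'] (ω : ℕ) (M : Matrix l n' ℂ)
    (N : ℕ → Matrix n' m ℂ) (s : ℂ) :
    M * polyEval ω N s = ∑ i ∈ range (ω+1), s^i • (M * N i) := by
  unfold polyEval
  rw [Matrix.mul_sum]
  exact Finset.sum_congr rfl fun i _ => Matrix.mul_smul M (s^i) (N i)

/-- the parametric formulas built from the decoupled factorizations
solve the decoupled generalized Sylvester equations. -/
theorem stmt_7 {n m p : ℕ} (ω : ℕ)
    (A1 A2 : Matrix (Fin n) (Fin n) ℂ) (B1 B2 : Matrix (Fin n) (Fin m) ℂ)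
    (F1 F2 : Matrix (Fin p) (Fin p) ℝ)
    (Np Nm : ℕ → Matrix (Fin n) (Fin m) ℂ) (Dp Dm : ℕ → Matrix (Fin m) (Fin m) ℂ)
    (hplus : ∀ s : ℂ,
      (s • (1 : Matrix (Fin n) (Fin n) ℂ) - A1) * polyEval ω Np s
          - mconj A2 * polyEval ω (fun i => mconj (Np i)) s
        = B1 * polyEval ω Dp s + mconj B2 * polyEval ω (fun i => mconj (Dp i)) s)
    (hminus : ∀ s : ℂ,
      (s • (1 : Matrix (Fin n) (Fin n) ℂ) - A1) * polyEval ω Nm s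
          + mconj A2 * polyEval ω (fun i => mconj (Nm i)) s
        = B1 * polyEval ω Dm s - mconj B2 * polyEval ω (fun i => mconj (Dm i)) s)
    (Z1 Z2 Zp Zm : Matrix (Fin m) (Fin p) ℂ)
    (hZp : Zp = Z1 + mconj Z2) (hZm : Zm = Z1 - mconj Z2)
    (Xp Xm : Matrix (Fin n) (Fin p) ℂ) (Yp Ym : Matrix (Fin m) (Fin p) ℂ)
    (hXp : Xp = (1/2 : ℂ) • ∑ i ∈ range (ω + 1),
      (Np i * (Zp + mconj Zp) + Nm i * (Zp - mconj Zp))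
        * (F1.map Complex.ofReal + F2.map Complex.ofReal) ^ i)
    (hYp : Yp = (1/2 : ℂ) • ∑ i ∈ range (ω + 1),
      (Dp i * (Zp + mconj Zp) + Dm i * (Zp - mconj Zp))
        * (F1.map Complex.ofReal + F2.map Complex.ofReal) ^ i)
    (hXm : Xm = (1/2 : ℂ) • ∑ i ∈ range (ω + 1),
      (Nm i * (Zm + mconj Zm) + Np i * (Zm - mconj Zm))
        * (F1.map Complex.ofReal - F2.map Complex.ofReal) ^ i)
    (hYm : Ym = (1/2 : ℂ) • ∑ i ∈ range (ω + 1),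
      (Dm i * (Zm + mconj Zm) + Dp i * (Zm - mconj Zm))
        * (F1.map Complex.ofReal - F2.map Complex.ofReal) ^ i) :
    A1 * Xp + mconj A2 * mconj Xp + B1 * Yp + mconj B2 * mconj Yp
        = Xp * (F1.map Complex.ofReal + F2.map Complex.ofReal) ∧
      A1 * Xm - mconj A2 * mconj Xm + B1 * Ym - mconj B2 * mconj Ym
        = Xm * (F1.map Complex.ofReal - F2.map Complex.ofReal) := by
  -- the coefficient families on the right-hand sides
  set Sp : ℕ → Matrix (Fin n) (Fin m) ℂ := fun i =>
    A1 * Np i + mconj A2 * mconj (Np i) + (B1 * Dp i + mconj B2 * mconj (Dp i)) with hSpdef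
  set Sm : ℕ → Matrix (Fin n) (Fin m) ℂ := fun i =>
    A1 * Nm i - mconj A2 * mconj (Nm i) + (B1 * Dm i - mconj B2 * mconj (Dm i)) with hSmdef
  have hp' : ∀ s : ℂ, ∑ i ∈ range (ω+1), s^(i+1) • Np i
      = ∑ i ∈ range (ω+1), s^i • Sp i := by
    intro s
    have h := hplus s
    rw [Matrix.sub_mul, Matrix.smul_mul, Matrix.one_mul] at h
    have h2 : s • polyEval ω Np s
        = A1 * polyEval ω Np s + mconj A2 * polyEval ω (fun i => mconj (Np i)) s
          + (B1 * polyEval ω Dp s + mconj B2 * polyEval ω (fun i => mconj (Dp i)) s) := by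
      rw [← h]; abel
    rw [smul_polyEval, mul_polyEval, mul_polyEval, mul_polyEval, mul_polyEval] at h2
    rw [h2, ← Finset.sum_add_distrib, ← Finset.sum_add_distrib, ← Finset.sum_add_distrib]
    apply Finset.sum_congr rfl
    intro i _
    simp only [hSpdef, smul_add]
  have hm' : ∀ s : ℂ, ∑ i ∈ range (ω+1), s^(i+1) • Nm i
      = ∑ i ∈ range (ω+1), s^i • Sm i := by
    intro s
    have h := hminus s
    rw [Matrix.sub_mul, Matrix.smul_mul, Matrix.one_mul] at h
    have h2 : s • polyEval ω Nm s
        = A1 * polyEval ω Nm s - mconj A2 * polyEval ω (fun i => mconj (Nm i)) s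
          + (B1 * polyEval ω Dm s - mconj B2 * polyEval ω (fun i => mconj (Dm i)) s) := by
      rw [← h]; abel
    rw [smul_polyEval, mul_polyEval, mul_polyEval, mul_polyEval, mul_polyEval] at h2
    rw [h2, ← Finset.sum_sub_distrib, ← Finset.sum_sub_distrib, ← Finset.sum_add_distrib]
    apply Finset.sum_congr rfl
    intro i _
    simp only [hSmdef, smul_add, smul_sub]
  obtain ⟨hSp0, hSpS, hNpT⟩ := extract ω Np Sp hp'
  obtain ⟨hSm0, hSmS, hNmT⟩ := extract ω Nm Sm hm'
  have hWp : mconj (Zp + mconj Zp) = Zp + mconj Zp := by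
    rw [mconj_add, mconj_mconj, add_comm]
  have hVp : mconj (Zp - mconj Zp) = -(Zp - mconj Zp) := by
    rw [mconj_sub, mconj_mconj, neg_sub]
  have hWm : mconj (Zm + mconj Zm) = Zm + mconj Zm := by
    rw [mconj_add, mconj_mconj, add_comm]
  have hVm : mconj (Zm - mconj Zm) = -(Zm - mconj Zm) := by
    rw [mconj_sub, mconj_mconj, neg_sub]
  have hGp : mconj (F1.map Complex.ofReal + F2.map Complex.ofReal)
      = F1.map Complex.ofReal + F2.map Complex.ofReal := by
    rw [mconj_add, mconj_map_ofReal, mconj_map_ofReal]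
  have hGm : mconj (F1.map Complex.ofReal - F2.map Complex.ofReal)
      = F1.map Complex.ofReal - F2.map Complex.ofReal := by
    rw [mconj_sub, mconj_map_ofReal, mconj_map_ofReal]
  constructor
  · have := assemble ω 1 A1 A2 B1 B2 Np Nm Dp Dm (Zp + mconj Zp) (Zp - mconj Zp)
      (F1.map Complex.ofReal + F2.map Complex.ofReal) hWp hVp hGp Xp Yp hXp hYp
      (by simpa [hSpdef, add_assoc] using hSp0)
      (fun i hi => by simpa [hSpdef, add_assoc] using hSpS i hi)
      hNpT
      (by simpa [hSmdef, sub_eq_add_neg, add_assoc] using hSm0)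
      (fun i hi => by simpa [hSmdef, sub_eq_add_neg, add_assoc] using hSmS i hi)
      hNmT
    simpa using this
  · have := assemble ω (-1) A1 A2 B1 B2 Nm Np Dm Dp (Zm + mconj Zm) (Zm - mconj Zm)
      (F1.map Complex.ofReal - F2.map Complex.ofReal) hWm hVm hGm Xm Ym hXm hYm
      (by simpa [hSmdef, sub_eq_add_neg, add_assoc] using hSm0)
      (fun i hi => by simpa [hSmdef, sub_eq_add_neg, add_assoc] using hSmS i hi)
      hNmT
      (by simpa [hSpdef, sub_eq_add_neg, add_assoc] using hSp0)
      (fun i hi => by simpa [hSpdef, sub_eq_add_neg, add_assoc] using hSpS i hi)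
      hNpT
    simpa [sub_eq_add_neg] using this
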